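/- Suppose in a search game the payoffs are ordinally consistent and solitary-search dominant, social value outweighs cost (μ(ω)·v_s(ω) ≥ μ(π_i)·(c_i(K_i) − c_i(K_i−1)) for all ω, i, π_i), and there exists a redundancy-free strategy profile. Then the game admits a pure Nash equilibrium that maximizes the cost-inclusive social payoff U_CI(s) = ∑_ω μ(ω)·(v_s(ω)·1[m_s(ω)≥1] − ∑_i c_i(|s_i(π_i(ω))|)) over all pure profiles. -/

import Mathlib

open scoped Classical
noncomputable section

variable {N Ω : Type}

/-- `P` is a partition of the finite type `Ω` into nonempty, pairwise disjoint cells. -/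
def IsPartition [Fintype Ω] [DecidableEq Ω] (P : Finset (Finset Ω)) : Prop :=
  (∀ π ∈ P, π.Nonempty) ∧
  (∀ π ∈ P, ∀ π' ∈ P, π ≠ π' → Disjoint π π') ∧
  (∀ ω : Ω, ∃ π ∈ P, ω ∈ π)

/-- `f` is a valid strategy for player `i`: in every cell it searches a subset of
the cell of size at most the capacity `K i`. -/
def ValidFor [DecidableEq Ω] (Part : N → Finset (Finset Ω)) (K : N → ℕ) (i : N)
    (f : Finset Ω → Finset Ω) : Prop :=
  ∀ π ∈ Part i, f π ⊆ π ∧ (f π).card ≤ K i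

/-- A valid pure strategy profile. -/
def ValidStrat [DecidableEq Ω] (Part : N → Finset (Finset Ω)) (K : N → ℕ)
    (s : N → Finset Ω → Finset Ω) : Prop :=
  ∀ i, ValidFor Part K i (s i)

/-- Player `i` searches location `ω` under profile `s` (when the prize is at `ω`). -/
def searchesAt (Part : N → Finset (Finset Ω)) (s : N → Finset Ω → Finset Ω)
    (i : N) (ω : Ω) : Prop :=
  ∃ π ∈ Part i, ω ∈ π ∧ ω ∈ s i π

/-- Location `ω` is searched by some player under profile `s`. -/
def searched (Part : N → Finset (Finset Ω)) (s : N → Finset Ω → Finset Ω)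
    (ω : Ω) : Prop :=
  ∃ i, searchesAt Part s i ω

/-- The number of players searching `ω` under `s`. -/
def mcount [Fintype N] (Part : N → Finset (Finset Ω))
    (s : N → Finset Ω → Finset Ω) (ω : Ω) : ℕ :=
  (Finset.univ.filter fun i => searchesAt Part s i ω).card


noncomputable section

/-- Expected payoff of player `i` under profile `s`: for each location `ω`
(weighted by the prior `μ`), the reward `v i m ω` if `i` searches `ω` when `m`
players search there, minus the search cost `c i k` for searching `k` locations
in the realized cell. -/
def payoff {N Ω : Type} [Fintype N] [Fintype Ω] [DecidableEq Ω]
    (Part : N → Finset (Finset Ω)) (μ : Ω → ℝ) (c : N → ℕ → ℝ)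
    (v : N → ℕ → Ω → ℝ) (i : N) (s : N → Finset Ω → Finset Ω) : ℝ :=
  ∑ ω : Ω, μ ω *
    ((if searchesAt Part s i ω then v i (mcount Part s ω) ω else 0)
      - ∑ π ∈ (Part i).filter (fun π => ω ∈ π), c i ((s i π).card))

/-- A (pure Bayesian) Nash equilibrium: a valid profile from which no player
has a profitable unilateral deviation to another valid strategy. -/
def IsNash {N Ω : Type} [Fintype N] [DecidableEq N] [Fintype Ω] [DecidableEq Ω]
    (Part : N → Finset (Finset Ω)) (K : N → ℕ) (μ : Ω → ℝ) (c : N → ℕ → ℝ)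
    (v : N → ℕ → Ω → ℝ) (s : N → Finset Ω → Finset Ω) : Prop :=
  ValidStrat Part K s ∧
  ∀ (i : N) (t : Finset Ω → Finset Ω), ValidFor Part K i t →
    payoff Part μ c v i (Function.update s i t) ≤ payoff Part μ c v i s

end


noncomputable section

/-- Cost-inclusive expected social payoff: the social value when the prize is
found, minus the search costs of all players. -/
def costInclusiveSocialPayoff {N Ω : Type} [Fintype N] [Fintype Ω] [DecidableEq Ω]
    (Part : N → Finset (Finset Ω)) (μ : Ω → ℝ) (vs : Ω → ℝ) (c : N → ℕ → ℝ)
    (s : N → Finset Ω → Finset Ω) : ℝ :=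
  ∑ ω : Ω, μ ω *
    (vs ω * (if 1 ≤ mcount Part s ω then 1 else 0)
      - ∑ i, ∑ π ∈ (Part i).filter (fun π => ω ∈ π), c i ((s i π).card))

end

/-!
Encode redundancy-free profiles as injective placements of locations into slots, one slot per
player, cell and unit of capacity. Take a placement maximising the social value `∑ μ ω * vs ω`
and, among those, the solitary private value `∑ μ ω * v i 1 ω`. By ordinal consistency, swapping
a searched location for a more valuable unsearched one of the same cell does not lower the social
value, so this placement is greedy within every cell, and solitary-search dominance then rules
out every unilateral deviation. For social optimality, Hall's theorem extends the locations
searched under any profile `s` to a placement; the extra locations are worth at least the cost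
that `s` saves on its unused capacity, because social value outweighs marginal cost.
-/

theorem IsPartition.eq_of_mem [Fintype Ω] [DecidableEq Ω] {P : Finset (Finset Ω)}
    (hP : IsPartition P) {π π' : Finset Ω} (hπ : π ∈ P) (hπ' : π' ∈ P) {ω : Ω} (hω : ω ∈ π)
    (hω' : ω ∈ π') : π = π' := by
  by_contra h
  exact Finset.disjoint_left.mp (hP.2.1 π hπ π' hπ' h) hω hω'

theorem IsPartition.sum_eq [Fintype Ω] [DecidableEq Ω] {P : Finset (Finset Ω)}
    (hP : IsPartition P) (f : Ω → ℝ) : ∑ ω, f ω = ∑ π ∈ P, ∑ ω ∈ π, f ω := by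
  have huniv : (Finset.univ : Finset Ω) = P.biUnion fun π => π := by
    ext ω
    simpa using hP.2.2 ω
  rw [huniv, Finset.sum_biUnion fun π hπ π' hπ' hne => hP.2.1 π hπ π' hπ' hne]

namespace SearchGame

open Finset Function

section Combinatorics

theorem sum_mul_le_sum_of_le {ι κ : Type*} (s : Finset ι) (t : Finset κ) (w : ι → ℕ)
    (a : ι → ℝ) (g : κ → ℝ) (hw : ∑ i ∈ s, w i ≤ #t)
    (hag : ∀ i ∈ s, ∀ j ∈ t, a i ≤ g j) (hg : ∀ j ∈ t, 0 ≤ g j) :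
    ∑ i ∈ s, (w i : ℝ) * a i ≤ ∑ j ∈ t, g j := by
  rcases t.eq_empty_or_nonempty with rfl | ht
  · have hw0 : ∀ i ∈ s, w i = 0 := by simpa using hw
    rw [sum_eq_zero fun i hi => by rw [hw0 i hi, Nat.cast_zero, zero_mul], sum_empty]
  obtain ⟨j₀, hj₀, hmin⟩ := t.exists_min_image g ht
  calc ∑ i ∈ s, (w i : ℝ) * a i ≤ ∑ i ∈ s, (w i : ℝ) * g j₀ :=
        sum_le_sum fun i hi => mul_le_mul_of_nonneg_left (hag i hi j₀ hj₀) (Nat.cast_nonneg _)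
    _ = ((∑ i ∈ s, w i : ℕ) : ℝ) * g j₀ := by rw [← sum_mul]; push_cast; rfl
    _ ≤ #t * g j₀ := mul_le_mul_of_nonneg_right (by exact_mod_cast hw) (hg j₀ hj₀)
    _ ≤ ∑ j ∈ t, g j := by simpa using card_nsmul_le_sum t g (g j₀) hmin

theorem sum_sub_le_sum_sub_of_exchange {α : Type*} [DecidableEq α] {A B : Finset α}
    {f g : α → ℝ} {n : ℕ} {a cA cB : ℝ} (hcard : #A + n ≤ #B)
    (heq : ∀ x ∈ A ∩ B, f x = g x) (hle : ∀ x ∈ A \ B, ∀ y ∈ B \ A, f x ≤ g y)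
    (ha : ∀ y ∈ B \ A, a ≤ g y) (hg : ∀ y ∈ B \ A, 0 ≤ g y) (hc : cB - cA ≤ n * a) :
    ∑ x ∈ A, f x - cA ≤ ∑ y ∈ B, g y - cB := by
  have hcard' : n + #(A \ B) ≤ #(B \ A) := by
    have := card_sdiff_add_card_inter A B
    have := card_sdiff_add_card_inter B A
    rw [inter_comm B A] at this
    omega
  -- the index `none` carries the `n` units of `a`
  have hexchange : (n : ℝ) * a + ∑ x ∈ A \ B, f x ≤ ∑ y ∈ B \ A, g y := by
    simpa [sum_insertNone] using sum_mul_le_sum_of_le (insertNone (A \ B)) (B \ A)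
      (fun o => o.elim n fun _ => 1) (fun o => o.elim a f) g
      (by simpa [sum_insertNone] using hcard')
      (fun o ho y hy => by
        cases o with
        | none => exact ha y hy
        | some x => exact hle x (by simpa using ho) y hy) hg
  rw [← sum_inter_add_sum_sdiff A B f, ← sum_inter_add_sum_sdiff B A g, inter_comm B A,
    sum_congr rfl heq]
  linarith

theorem sub_le_mul_sub_pred {c : ℕ → ℝ} (hc : ∀ k, c (k + 1) - c k ≤ c (k + 2) - c (k + 1))
    {k K : ℕ} (hk : k ≤ K) : c K - c k ≤ (K - k : ℕ) * (c K - c (K - 1)) := by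
  rcases hk.eq_or_lt with rfl | hlt
  · simp
  obtain ⟨K, rfl⟩ : ∃ K', K = K' + 1 := ⟨K - 1, by omega⟩
  have hmono : Monotone fun j => c (j + 1) - c j := monotone_nat_of_le_succ hc
  rw [← sum_Ico_sub c hk, Nat.add_sub_cancel, ← Nat.card_Ico k (K + 1), ← nsmul_eq_mul]
  exact sum_le_card_nsmul _ _ _ fun j hj => hmono (by simp at hj; omega)

theorem sum_apply_update {ι α : Type*} [Fintype ι] [DecidableEq ι] (g : ι → α → ℝ) (F : ι → α)
    (i : ι) (x : α) : ∑ j, g j (update F i x j) = ∑ j, g j (F j) - g i (F i) + g i x := by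
  rw [← add_sum_erase _ _ (mem_univ i), ← add_sum_erase _ (fun j => g j (F j)) (mem_univ i),
    update_self, sum_congr rfl fun j hj => by rw [update_of_ne (ne_of_mem_erase hj)]]
  ring

variable {L P α : Type*} [Fintype L] [Fintype P] [Fintype α] [DecidableEq α] [DecidableEq L]
  {cell : L → Finset α} {F₀ : L → α} {e : P → L} {val : P → α}

theorem card_le_card_biUnion_of_matchings (hF₀ : Injective F₀) (hF₀cell : ∀ l, F₀ l ∈ cell l)
    (he : Injective e) (hval : ∀ p, val p ∈ cell (e p))
    (A : Finset (L ⊕ Fin (Fintype.card α - Fintype.card L))) :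
    #A ≤ #(A.biUnion (Sum.elim cell fun _ => univ \ univ.image val)) := by
  set B := A.biUnion (Sum.elim cell fun _ => univ \ univ.image val)
  have hcell : ∀ l ∈ A.toLeft, cell l ⊆ B :=
    fun l hl => subset_biUnion_of_mem (Sum.elim _ _) (mem_toLeft.1 hl)
  have hleft : #A.toLeft ≤ #B :=
    card_le_card_of_injOn F₀ (fun l hl => hcell l hl (hF₀cell l)) hF₀.injOn
  rw [← card_toLeft_add_card_toRight]
  rcases A.toRight.eq_empty_or_nonempty with h | ⟨r, hr⟩
  · simpa [h] using hleft
  have hcompl : univ \ univ.image val ⊆ B :=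
    subset_biUnion_of_mem (Sum.elim cell fun _ => univ \ univ.image val) (mem_toRight.1 hr)
  have hmissed : #(univ.image val \ B) ≤ #(univ \ A.toLeft) :=
    calc #(univ.image val \ B) ≤ #((univ.filter fun p => val p ∉ B).image val) :=
          card_le_card fun x hx => by
            obtain ⟨⟨p, -, rfl⟩, hx⟩ := by simpa using hx
            simpa using ⟨p, hx, rfl⟩
      _ ≤ #(univ.filter fun p => val p ∉ B) := card_image_le
      _ ≤ #(univ \ A.toLeft) := card_le_card_of_injOn e
          (fun p hp => by simpa using fun h => (mem_filter.1 hp).2 (hcell _ h (hval p)))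
          he.injOn
  have hcover : Fintype.card α ≤ #B + #(univ.image val \ B) :=
    calc Fintype.card α = #(B ∪ (univ.image val \ B)) := by
          rw [← card_univ]
          congr 1
          ext x
          by_cases hx : x ∈ univ.image val
          · simp [hx]
          · simpa [hx] using hcompl (by simpa using hx)
      _ ≤ _ := card_union_le _ _
  have hright : #A.toRight ≤ Fintype.card α - Fintype.card L := by
    simpa using card_le_univ A.toRight
  have hcompl_card : #(univ \ A.toLeft) = Fintype.card L - #A.toLeft := by
    rw [card_sdiff_of_subset (subset_univ _), card_univ]
  have := card_le_univ A.toLeft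
  omega

/-- Hall's theorem, applied to `L` together with `card α - card L` dummy vertices that may only be
matched outside `range val`: in a perfect matching, `range val` is covered by `L`. -/
theorem exists_injective_cover_of_matchings (hF₀ : Injective F₀) (hF₀cell : ∀ l, F₀ l ∈ cell l)
    (he : Injective e) (hval : ∀ p, val p ∈ cell (e p)) :
    ∃ F : L → α, Injective F ∧ (∀ l, F l ∈ cell l) ∧ ∀ p, val p ∈ Set.range F := by
  obtain ⟨f, hf, hft⟩ := (all_card_le_biUnion_card_iff_exists_injective _).1
    (card_le_card_biUnion_of_matchings hF₀ hF₀cell he hval)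
  have hcard : Fintype.card L ≤ Fintype.card α := Fintype.card_le_of_injective F₀ hF₀
  have hbij : Bijective f := (Fintype.bijective_iff_injective_and_card f).2
    ⟨hf, by rw [Fintype.card_sum, Fintype.card_fin]; omega⟩
  refine ⟨f ∘ Sum.inl, hf.comp Sum.inl_injective, fun l => hft (Sum.inl l), fun p => ?_⟩
  obtain ⟨x | r, hx⟩ := hbij.2 (val p)
  · exact ⟨x, hx⟩
  · simpa [hx] using hft (Sum.inr r)

end Combinatorics

section Payoffs

variable (Part : N → Finset (Finset Ω))

theorem searchesAt_iff_mem [Fintype Ω] [DecidableEq Ω] {s : N → Finset Ω → Finset Ω} {i : N}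
    (hP : IsPartition (Part i)) {π : Finset Ω} (hπ : π ∈ Part i) {ω : Ω} (hω : ω ∈ π) :
    searchesAt Part s i ω ↔ ω ∈ s i π := by
  constructor
  · rintro ⟨π', hπ', hω', hmem⟩
    rwa [hP.eq_of_mem hπ hπ' hω hω']
  · exact fun h => ⟨π, hπ, hω, h⟩

variable [Fintype N]

theorem one_le_mcount_iff (s : N → Finset Ω → Finset Ω) (ω : Ω) :
    1 ≤ mcount Part s ω ↔ searched Part s ω := by
  simp [mcount, Nat.one_le_iff_ne_zero, card_eq_zero, filter_eq_empty_iff, searched]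

theorem eq_of_searchesAt_of_mcount_le_one {s : N → Finset Ω → Finset Ω} {ω : Ω}
    (hm : mcount Part s ω ≤ 1) {i j : N} (hi : searchesAt Part s i ω)
    (hj : searchesAt Part s j ω) : i = j :=
  card_le_one.mp hm i (by simpa using hi) j (by simpa using hj)

variable [Fintype Ω] [DecidableEq Ω]

theorem sum_mul_sum_filter_mem (P : Finset (Finset Ω)) (μ : Ω → ℝ) (g : Finset Ω → ℝ) :
    ∑ ω, μ ω * ∑ π ∈ P with ω ∈ π, g π = ∑ π ∈ P, (∑ ω ∈ π, μ ω) * g π := by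
  simp only [sum_filter, mul_sum, mul_ite, mul_zero, sum_mul]
  rw [sum_comm]
  refine sum_congr rfl fun π _ => ?_
  rw [sum_ite_mem, univ_inter]

theorem mcount_update_add [DecidableEq N] {i : N} (hP : IsPartition (Part i))
    (s : N → Finset Ω → Finset Ω) (t : Finset Ω → Finset Ω) {π : Finset Ω} (hπ : π ∈ Part i)
    {ω : Ω} (hω : ω ∈ π) :
    mcount Part (update s i t) ω + (if ω ∈ s i π then 1 else 0)
      = mcount Part s ω + (if ω ∈ t π then 1 else 0) := by
  have hsplit : ∀ s' : N → Finset Ω → Finset Ω, mcount Part s' ω = (if ω ∈ s' i π then 1 else 0)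
      + ∑ j ∈ univ.erase i, if searchesAt Part s' j ω then 1 else 0 := by
    intro s'
    rw [mcount, card_filter, ← add_sum_erase _ _ (mem_univ i),
      if_congr (searchesAt_iff_mem Part hP hπ hω) rfl rfl]
  have hothers : ∀ j ∈ univ.erase i,
      searchesAt Part (update s i t) j ω ↔ searchesAt Part s j ω := fun j hj => by
    simp [searchesAt, update_of_ne (ne_of_mem_erase hj)]
  rw [hsplit, hsplit, sum_congr rfl fun j hj => if_congr (hothers j hj) rfl rfl, update_self]
  ring

variable (μ : Ω → ℝ)

theorem payoff_eq_sum_cells (K : N → ℕ) (c : N → ℕ → ℝ) (v : N → ℕ → Ω → ℝ) {i : N}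
    (hP : IsPartition (Part i)) {s : N → Finset Ω → Finset Ω} (hs : ValidFor Part K i (s i)) :
    payoff Part μ c v i s = ∑ π ∈ Part i,
      (∑ ω ∈ s i π, μ ω * v i (mcount Part s ω) ω - (∑ x ∈ π, μ x) * c i #(s i π)) := by
  simp only [payoff, mul_sub, sum_sub_distrib, sum_mul_sum_filter_mem]
  congr 1
  rw [hP.sum_eq]
  refine sum_congr rfl fun π hπ => ?_
  have hsearch : ∀ ω ∈ π, searchesAt Part s i ω ↔ ω ∈ s i π :=
    fun ω hω => searchesAt_iff_mem Part hP hπ hω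
  rw [← sum_subset (hs π hπ).1 fun ω hω hns => by rw [if_neg ((hsearch ω hω).not.2 hns), mul_zero]]
  exact sum_congr rfl fun ω hω => by rw [if_pos ((hsearch ω ((hs π hπ).1 hω)).2 hω)]

theorem costInclusiveSocialPayoff_eq (vs : Ω → ℝ) (c : N → ℕ → ℝ)
    (s : N → Finset Ω → Finset Ω) :
    costInclusiveSocialPayoff Part μ vs c s
      = ∑ ω with 1 ≤ mcount Part s ω, μ ω * vs ω
        - ∑ i, ∑ π ∈ Part i, (∑ x ∈ π, μ x) * c i #(s i π) := by
  simp only [costInclusiveSocialPayoff, mul_sub, sum_sub_distrib, mul_sum (s := univ)]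
  congr 1
  · simp only [sum_filter, mul_ite, mul_one, mul_zero]
  · rw [sum_comm]
    simp only [sum_mul_sum_filter_mem]

end Payoffs

section Placements

variable [DecidableEq Ω] (Part : N → Finset (Finset Ω)) (K : N → ℕ)

abbrev Slot : Type := Σ i : N, {π : Finset Ω // π ∈ Part i} × Fin (K i)

def IsPlacement (F : Slot Part K → Ω) : Prop :=
  Injective F ∧ ∀ l, F l ∈ (l.2.1 : Finset Ω)

def profileOf (F : Slot Part K → Ω) : N → Finset Ω → Finset Ω := fun i π =>
  if h : π ∈ Part i then univ.image fun j => F ⟨i, ⟨π, h⟩, j⟩ else ∅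

variable {Part K}

theorem IsPlacement.update {F : Slot Part K → Ω} (hF : IsPlacement Part K F) {l : Slot Part K}
    {x : Ω} (hx : x ∈ (l.2.1 : Finset Ω)) (hxF : x ∉ Set.range F) :
    IsPlacement Part K (update F l x) := by
  refine ⟨fun a b hab => ?_, fun a => ?_⟩
  · rcases eq_or_ne a l with rfl | ha <;> rcases eq_or_ne b a with rfl | hb
    · rfl
    · rw [update_self, update_of_ne hb] at hab
      exact absurd ⟨b, hab.symm⟩ hxF
    · rfl
    · rcases eq_or_ne b l with rfl | hbl
      · rw [update_self, update_of_ne ha] at hab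
        exact absurd ⟨a, hab⟩ hxF
      · rw [update_of_ne ha, update_of_ne hbl] at hab
        exact hF.1 hab
  · rcases eq_or_ne a l with rfl | ha
    · rwa [update_self]
    · rw [update_of_ne ha]
      exact hF.2 a

theorem mem_profileOf {F : Slot Part K → Ω} {i : N} {π : Finset Ω} (hπ : π ∈ Part i) {ω : Ω} :
    ω ∈ profileOf Part K F i π ↔ ∃ j, F ⟨i, ⟨π, hπ⟩, j⟩ = ω := by
  simp [profileOf, hπ]

theorem searchesAt_profileOf {F : Slot Part K → Ω} (hF : IsPlacement Part K F) {i : N} {ω : Ω} :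
    searchesAt Part (profileOf Part K F) i ω ↔ ∃ l : Slot Part K, l.1 = i ∧ F l = ω := by
  constructor
  · rintro ⟨π, hπ, -, hω⟩
    obtain ⟨j, rfl⟩ := (mem_profileOf hπ).1 hω
    exact ⟨_, rfl, rfl⟩
  · rintro ⟨⟨i, ⟨π, hπ⟩, j⟩, rfl, rfl⟩
    exact ⟨π, hπ, hF.2 _, (mem_profileOf hπ).2 ⟨j, rfl⟩⟩

theorem validStrat_profileOf {F : Slot Part K → Ω} (hF : IsPlacement Part K F) :
    ValidStrat Part K (profileOf Part K F) := by
  intro i π hπ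
  refine ⟨fun ω hω => ?_, ?_⟩
  · obtain ⟨j, rfl⟩ := (mem_profileOf hπ).1 hω
    exact hF.2 _
  · rw [profileOf, dif_pos hπ]
    exact card_image_le.trans (by simp)

theorem card_profileOf {F : Slot Part K → Ω} (hF : IsPlacement Part K F) {i : N} {π : Finset Ω}
    (hπ : π ∈ Part i) : #(profileOf Part K F i π) = K i := by
  rw [profileOf, dif_pos hπ, card_image_of_injective _ fun j j' h => by simpa using hF.1 h]
  simp

variable [Fintype N]

theorem mcount_profileOf {F : Slot Part K → Ω} (hF : IsPlacement Part K F) (ω : Ω) :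
    mcount Part (profileOf Part K F) ω = if ω ∈ Set.range F then 1 else 0 := by
  rw [mcount]
  split_ifs with h
  · obtain ⟨l, rfl⟩ := h
    rw [card_eq_one]
    refine ⟨l.1, eq_singleton_iff_unique_mem.2 ⟨?_, fun i hi => ?_⟩⟩
    · simpa using (searchesAt_profileOf hF).2 ⟨l, rfl, rfl⟩
    · obtain ⟨l', rfl, hl'⟩ := (searchesAt_profileOf hF).1 (mem_filter.1 hi).2
      rw [hF.1 hl']
  · refine card_eq_zero.2 (filter_eq_empty_iff.2 fun i _ hi => h ?_)
    obtain ⟨l, -, hl⟩ := (searchesAt_profileOf hF).1 hi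
    exact ⟨l, hl⟩

theorem mcount_profileOf_le_one {F : Slot Part K → Ω} (hF : IsPlacement Part K F) (ω : Ω) :
    mcount Part (profileOf Part K F) ω ≤ 1 := by
  rw [mcount_profileOf hF]
  split_ifs <;> simp

theorem sum_searched_profileOf [Fintype Ω] {F : Slot Part K → Ω} (hF : IsPlacement Part K F)
    (w : Ω → ℝ) : ∑ ω with 1 ≤ mcount Part (profileOf Part K F) ω, w ω = ∑ l, w (F l) := by
  have hsearched : univ.filter (fun ω => 1 ≤ mcount Part (profileOf Part K F) ω)
      = univ.image F := by
    ext ω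
    simp only [mem_filter, mem_univ, true_and, mem_image, mcount_profileOf hF]
    split_ifs with h <;> simpa using h
  rw [hsearched, sum_image hF.1.injOn]

end Placements

section Probes

variable [DecidableEq Ω] {Part : N → Finset (Finset Ω)} {K : N → ℕ}

abbrev Probe (Part : N → Finset (Finset Ω)) (s : N → Finset Ω → Finset Ω) : Type :=
  Σ i : N, Σ π : {π : Finset Ω // π ∈ Part i}, {x : Ω // x ∈ s i π}

def Probe.toSlot {s : N → Finset Ω → Finset Ω} (hs : ValidStrat Part K s) (p : Probe Part s) :
    Slot Part K :=
  ⟨p.1, p.2.1, Fin.castLE (hs p.1 p.2.1 p.2.1.2).2 ((s p.1 p.2.1).equivFin p.2.2)⟩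

theorem Probe.toSlot_injective {s : N → Finset Ω → Finset Ω} (hs : ValidStrat Part K s) :
    Injective (Probe.toSlot hs) := by
  rintro ⟨i, π, x⟩ ⟨i', π', x'⟩ h
  obtain ⟨rfl, h⟩ := Sigma.mk.inj_iff.1 h
  obtain ⟨rfl, h⟩ := Prod.mk_inj.1 (eq_of_heq h)
  obtain rfl := (s i π).equivFin.injective (Fin.castLE_injective _ h)
  rfl

variable [Fintype Ω] [Fintype N]

theorem Probe.loc_injective (hPart : ∀ i, IsPartition (Part i))
    {s : N → Finset Ω → Finset Ω} (hs : ValidStrat Part K s) (hm : ∀ ω, mcount Part s ω ≤ 1) :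
    Injective fun p : Probe Part s => (p.2.2 : Ω) := by
  rintro ⟨i, ⟨π, hπ⟩, ⟨x, hx⟩⟩ ⟨i', ⟨π', hπ'⟩, ⟨x', hx'⟩⟩ (rfl : x = x')
  obtain rfl := eq_of_searchesAt_of_mcount_le_one Part (hm x) ⟨π, hπ, (hs i π hπ).1 hx, hx⟩
    ⟨π', hπ', (hs _ π' hπ').1 hx', hx'⟩
  obtain rfl := (hPart i).eq_of_mem hπ hπ' ((hs i π hπ).1 hx) ((hs i π' hπ').1 hx')
  rfl

theorem exists_placement_of_redundancyFree (hPart : ∀ i, IsPartition (Part i))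
    {s : N → Finset Ω → Finset Ω} (hs : ValidStrat Part K s)
    (hfull : ∀ i, ∀ π ∈ Part i, #(s i π) = K i) (hm : ∀ ω, mcount Part s ω ≤ 1) :
    ∃ F, IsPlacement Part K F := by
  have hcard : Fintype.card (Probe Part s) = Fintype.card (Slot Part K) := by
    simp only [Fintype.card_sigma, Fintype.card_prod, Fintype.card_coe, Fintype.card_fin]
    refine sum_congr rfl fun i _ => ?_
    rw [sum_congr rfl fun π _ => hfull i π.1 π.2]
    simp
  let toSlot := Equiv.ofBijective (Probe.toSlot hs)
    ((Fintype.bijective_iff_injective_and_card _).2 ⟨Probe.toSlot_injective hs, hcard⟩)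
  refine ⟨fun l => (toSlot.symm l).2.2,
    (Probe.loc_injective hPart hs hm).comp toSlot.symm.injective, fun l => ?_⟩
  have h : ((toSlot.symm l).2.2 : Ω) ∈ ((toSlot (toSlot.symm l)).2.1 : Finset Ω) :=
    (hs _ _ (toSlot.symm l).2.1.2).1 (toSlot.symm l).2.2.2
  rwa [Equiv.apply_symm_apply] at h

theorem exists_placement_cover {F₀ : Slot Part K → Ω} (hF₀ : IsPlacement Part K F₀)
    {s : N → Finset Ω → Finset Ω} (hs : ValidStrat Part K s) :
    ∃ F, IsPlacement Part K F ∧ ∀ ω, 1 ≤ mcount Part s ω → ω ∈ Set.range F := by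
  obtain ⟨F, hF, hFcell, hcover⟩ := exists_injective_cover_of_matchings
    (cell := fun l => l.2.1.1) hF₀.1 hF₀.2 (Probe.toSlot_injective hs)
    (val := fun p => p.2.2.1) fun p => (hs _ _ p.2.1.2).1 p.2.2.2
  refine ⟨F, ⟨hF, hFcell⟩, fun ω hω => ?_⟩
  obtain ⟨i, π, hπ, -, hω⟩ := (one_le_mcount_iff Part s ω).1 hω
  exact hcover ⟨i, ⟨π, hπ⟩, ⟨ω, hω⟩⟩

end Probes

section Equilibrium

variable [Fintype N] {Part : N → Finset (Finset Ω)} {K : N → ℕ} {μ : Ω → ℝ}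
  {c : N → ℕ → ℝ} {v : N → ℕ → Ω → ℝ}

variable (Part μ v) in
def IsGreedy (S : N → Finset Ω → Finset Ω) : Prop :=
  ∀ i, ∀ π ∈ Part i, ∀ ω ∈ π, mcount Part S ω = 0 →
    ∀ ω' ∈ S i π, μ ω * v i 1 ω ≤ μ ω' * v i 1 ω'

variable [DecidableEq Ω]

theorem isGreedy_profileOf {F : Slot Part K → Ω} (hF : IsPlacement Part K F)
    (hexch : ∀ l x, x ∈ (l.2.1 : Finset Ω) → x ∉ Set.range F →
      μ x * v l.1 1 x ≤ μ (F l) * v l.1 1 (F l)) :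
    IsGreedy Part μ v (profileOf Part K F) := by
  intro i π hπ ω hω h0 ω' hω'
  obtain ⟨j, rfl⟩ := (mem_profileOf hπ).1 hω'
  exact hexch ⟨i, ⟨π, hπ⟩, j⟩ ω hω (by simpa [mcount_profileOf hF] using h0)

variable [Fintype Ω]

theorem exists_greedy_optimal_placement (vs : Ω → ℝ)
    (hOC : ∀ i, ∀ π ∈ Part i, ∀ ω ∈ π, ∀ ω' ∈ π,
      μ ω * v i 1 ω < μ ω' * v i 1 ω' → μ ω * vs ω ≤ μ ω' * vs ω')
    (hne : ∃ F, IsPlacement Part K F) :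
    ∃ F, IsPlacement Part K F ∧
      (∀ F', IsPlacement Part K F' → ∑ l, μ (F' l) * vs (F' l) ≤ ∑ l, μ (F l) * vs (F l)) ∧
      ∀ l x, x ∈ (l.2.1 : Finset Ω) → x ∉ Set.range F →
        μ x * v l.1 1 x ≤ μ (F l) * v l.1 1 (F l) := by
  let value : (Slot Part K → Ω) → ℝ ×ₗ ℝ := fun F =>
    toLex (∑ l, μ (F l) * vs (F l), ∑ l, μ (F l) * v l.1 1 (F l))
  obtain ⟨F, hF, hmax⟩ := (univ.filter (IsPlacement Part K)).exists_max_image value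
    (hne.imp fun F hF => mem_filter.2 ⟨mem_univ F, hF⟩)
  replace hF : IsPlacement Part K F := (mem_filter.1 hF).2
  replace hmax : ∀ F', IsPlacement Part K F' → value F' ≤ value F :=
    fun F' hF' => hmax F' (mem_filter.2 ⟨mem_univ _, hF'⟩)
  refine ⟨F, hF, fun F' hF' => Prod.Lex.monotone_fst _ _ (hmax F' hF'), fun l x hx hxF => ?_⟩
  by_contra! hlt
  have hvs := hOC l.1 _ l.2.1.2 (F l) (hF.2 l) x hx hlt
  have hsocial := sum_apply_update (fun _ ω => μ ω * vs ω) F l x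
  have hsolitary := sum_apply_update (fun l ω => μ ω * v l.1 1 ω) F l x
  refine (hmax _ (hF.update hx hxF)).not_gt (Prod.Lex.toLex_strictMono ?_)
  exact Prod.mk_lt_mk_of_le_of_lt (by linarith) (by linarith)

theorem cell_payoff_update_le [DecidableEq N] (hμ : ∀ ω, 0 ≤ μ ω)
    (hc_convex : ∀ i k, c i (k + 1) - c i k ≤ c i (k + 2) - c i (k + 1))
    (hv_nonneg : ∀ i m ω, 0 ≤ v i m ω) (hv_dec : ∀ i m ω, v i (m + 1) ω ≤ v i m ω)
    {S : N → Finset Ω → Finset Ω} (hm : ∀ ω, mcount Part S ω ≤ 1)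
    (hgreedy : IsGreedy Part μ v S) {i : N} (hP : IsPartition (Part i)) {π : Finset Ω}
    (hπ : π ∈ Part i) (hSπ : S i π ⊆ π) (hfull : #(S i π) = K i)
    (hSSD1 : ∀ ω ∈ π, ∀ ω' ∈ π, μ ω * v i 2 ω ≤ μ ω' * v i 1 ω')
    (hSSD2 : ∀ ω ∈ π, (∑ x ∈ π, μ x) * (c i (K i) - c i (K i - 1)) ≤ μ ω * v i 1 ω)
    {t : Finset Ω → Finset Ω} (ht : ValidFor Part K i t) :
    ∑ ω ∈ t π, μ ω * v i (mcount Part (update S i t) ω) ω - (∑ x ∈ π, μ x) * c i #(t π)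
      ≤ ∑ ω ∈ S i π, μ ω * v i (mcount Part S ω) ω - (∑ x ∈ π, μ x) * c i #(S i π) := by
  obtain ⟨htπ, htcard⟩ := ht π hπ
  have hupd := fun ω (hω : ω ∈ π) => mcount_update_add Part hP S t hπ hω
  have hone : ∀ ω ∈ S i π, mcount Part S ω = 1 := fun ω hω =>
    le_antisymm (hm ω) ((one_le_mcount_iff Part S ω).2 ⟨i, π, hπ, hSπ hω, hω⟩)
  have hsolitary : ∑ ω ∈ S i π, μ ω * v i (mcount Part S ω) ω = ∑ ω ∈ S i π, μ ω * v i 1 ω :=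
    sum_congr rfl fun ω hω => by rw [hone ω hω]
  rw [hsolitary, hfull]
  refine sum_sub_le_sum_sub_of_exchange (n := K i - #(t π)) (by omega) (fun ω hω => ?_)
    (fun ω hω ω' hω' => ?_) (fun ω' hω' => hSSD2 ω' (hSπ (mem_sdiff.1 hω').1))
    (fun ω' _ => mul_nonneg (hμ ω') (hv_nonneg i 1 ω')) ?_
  · obtain ⟨hωt, hωS⟩ := mem_inter.1 hω
    have := hupd ω (htπ hωt)
    rw [if_pos hωS, if_pos hωt, hone ω hωS] at this
    rw [show mcount Part (update S i t) ω = 1 by omega]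
  · obtain ⟨hωt, hωS⟩ := mem_sdiff.1 hω
    have hω'S := (mem_sdiff.1 hω').1
    have := hupd ω (htπ hωt)
    rw [if_neg hωS, if_pos hωt] at this
    rcases Nat.eq_zero_or_pos (mcount Part S ω) with h0 | hpos
    · rw [show mcount Part (update S i t) ω = 1 by omega]
      exact hgreedy i π hπ ω (htπ hωt) h0 ω' hω'S
    · calc μ ω * v i (mcount Part (update S i t) ω) ω ≤ μ ω * v i 2 ω :=
            mul_le_mul_of_nonneg_left (antitone_nat_of_succ_le (f := (v i · ω)) (hv_dec i · ω)
              (show 2 ≤ mcount Part (update S i t) ω by omega)) (hμ ω)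
        _ ≤ μ ω' * v i 1 ω' := hSSD1 ω (htπ hωt) ω' (hSπ hω'S)
  · have hT : 0 ≤ ∑ x ∈ π, μ x := sum_nonneg fun x _ => hμ x
    have := mul_le_mul_of_nonneg_left (sub_le_mul_sub_pred (hc_convex i) htcard) hT
    linarith

theorem isNash_of_isGreedy [DecidableEq N] (hPart : ∀ i, IsPartition (Part i))
    (hμ : ∀ ω, 0 ≤ μ ω) (hc_convex : ∀ i k, c i (k + 1) - c i k ≤ c i (k + 2) - c i (k + 1))
    (hv_nonneg : ∀ i m ω, 0 ≤ v i m ω) (hv_dec : ∀ i m ω, v i (m + 1) ω ≤ v i m ω)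
    (hSSD1 : ∀ i, ∀ π ∈ Part i, ∀ ω ∈ π, ∀ ω' ∈ π, μ ω * v i 2 ω ≤ μ ω' * v i 1 ω')
    (hSSD2 : ∀ i, ∀ π ∈ Part i, ∀ ω ∈ π,
      (∑ x ∈ π, μ x) * (c i (K i) - c i (K i - 1)) ≤ μ ω * v i 1 ω)
    {S : N → Finset Ω → Finset Ω} (hS : ValidStrat Part K S)
    (hfull : ∀ i, ∀ π ∈ Part i, #(S i π) = K i) (hm : ∀ ω, mcount Part S ω ≤ 1)
    (hgreedy : IsGreedy Part μ v S) : IsNash Part K μ c v S := by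
  refine ⟨hS, fun i t ht => ?_⟩
  rw [payoff_eq_sum_cells Part μ K c v (hPart i) (s := update S i t) (by rwa [update_self]),
    payoff_eq_sum_cells Part μ K c v (hPart i) (hS i)]
  refine sum_le_sum fun π hπ => ?_
  simp only [update_self]
  exact cell_payoff_update_le hμ hc_convex hv_nonneg hv_dec hm hgreedy (hPart i) hπ
    (hS i π hπ).1 (hfull i π hπ) (hSSD1 i π hπ) (hSSD2 i π hπ) ht

end Equilibrium

section Optimality

variable [Fintype N] {Part : N → Finset (Finset Ω)} {K : N → ℕ}

theorem card_slot : Fintype.card (Slot Part K) = ∑ i, #(Part i) * K i := by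
  simp

variable [DecidableEq Ω] {μ vs : Ω → ℝ} {c : N → ℕ → ℝ}

/-- By convexity each unused unit of capacity saves at most the marginal cost of the last unit,
which the value of any location covers. -/
theorem fullCost_sub_cost_le_sum (hμ : ∀ ω, 0 ≤ μ ω) (hvs : ∀ ω, 0 ≤ vs ω)
    (hc_convex : ∀ i k, c i (k + 1) - c i k ≤ c i (k + 2) - c i (k + 1))
    (hVC : ∀ (ω : Ω) (i : N), ∀ π ∈ Part i,
      (∑ x ∈ π, μ x) * (c i (K i) - c i (K i - 1)) ≤ μ ω * vs ω)
    {s : N → Finset Ω → Finset Ω} (hs : ValidStrat Part K s) {D : Finset Ω}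
    (hD : ∑ i, ∑ π ∈ Part i, (K i - #(s i π)) ≤ #D) :
    ∑ i, ∑ π ∈ Part i, (∑ x ∈ π, μ x) * c i (K i)
      - ∑ i, ∑ π ∈ Part i, (∑ x ∈ π, μ x) * c i #(s i π) ≤ ∑ ω ∈ D, μ ω * vs ω := by
  simp only [← sum_sub_distrib]
  calc ∑ i, ∑ π ∈ Part i, ((∑ x ∈ π, μ x) * c i (K i) - (∑ x ∈ π, μ x) * c i #(s i π))
      ≤ ∑ i, ∑ π ∈ Part i,
          ((K i - #(s i π) : ℕ) : ℝ) * ((∑ x ∈ π, μ x) * (c i (K i) - c i (K i - 1))) :=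
        sum_le_sum fun i _ => sum_le_sum fun π hπ => by
          have hT : 0 ≤ ∑ x ∈ π, μ x := sum_nonneg fun x _ => hμ x
          have := mul_le_mul_of_nonneg_left (sub_le_mul_sub_pred (hc_convex i) (hs i π hπ).2) hT
          linarith
    _ = ∑ q ∈ univ.sigma Part, ((K q.1 - #(s q.1 q.2) : ℕ) : ℝ)
          * ((∑ x ∈ q.2, μ x) * (c q.1 (K q.1) - c q.1 (K q.1 - 1))) := by rw [sum_sigma]
    _ ≤ ∑ ω ∈ D, μ ω * vs ω := sum_mul_le_sum_of_le _ D _ _ _ (by rwa [sum_sigma])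
          (fun q hq ω _ => hVC ω q.1 q.2 (mem_sigma.1 hq).2) fun ω _ => mul_nonneg (hμ ω) (hvs ω)

variable [Fintype Ω]

theorem card_searched_le (s : N → Finset Ω → Finset Ω) :
    #{ω | 1 ≤ mcount Part s ω} ≤ ∑ i, ∑ π ∈ Part i, #(s i π) :=
  calc #{ω | 1 ≤ mcount Part s ω} ≤ #(univ.biUnion fun i => (Part i).biUnion (s i)) :=
        card_le_card fun ω hω => by
          obtain ⟨i, π, hπ, -, h⟩ := (one_le_mcount_iff Part s ω).1 (mem_filter.1 hω).2
          exact mem_biUnion.2 ⟨i, mem_univ i, mem_biUnion.2 ⟨π, hπ, h⟩⟩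
    _ ≤ ∑ i, #((Part i).biUnion (s i)) := card_biUnion_le
    _ ≤ ∑ i, ∑ π ∈ Part i, #(s i π) := sum_le_sum fun i _ => card_biUnion_le

theorem costInclusiveSocialPayoff_le_profileOf (hμ : ∀ ω, 0 ≤ μ ω) (hvs : ∀ ω, 0 ≤ vs ω)
    (hc_convex : ∀ i k, c i (k + 1) - c i k ≤ c i (k + 2) - c i (k + 1))
    (hVC : ∀ (ω : Ω) (i : N), ∀ π ∈ Part i,
      (∑ x ∈ π, μ x) * (c i (K i) - c i (K i - 1)) ≤ μ ω * vs ω)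
    {F : Slot Part K → Ω} (hF : IsPlacement Part K F)
    (hmax : ∀ F', IsPlacement Part K F' → ∑ l, μ (F' l) * vs (F' l) ≤ ∑ l, μ (F l) * vs (F l))
    {s : N → Finset Ω → Finset Ω} (hs : ValidStrat Part K s) :
    costInclusiveSocialPayoff Part μ vs c s
      ≤ costInclusiveSocialPayoff Part μ vs c (profileOf Part K F) := by
  obtain ⟨F', hF', hcover⟩ := exists_placement_cover hF hs
  set I : Finset Ω := {ω | 1 ≤ mcount Part s ω}
  have hI : I ⊆ univ.image F' := fun ω hω => by simpa using hcover ω (mem_filter.1 hω).2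
  have hD : ∑ i, ∑ π ∈ Part i, (K i - #(s i π)) ≤ #(univ.image F' \ I) := by
    have hsplit : ∑ i, ∑ π ∈ Part i, (K i - #(s i π)) + ∑ i, ∑ π ∈ Part i, #(s i π)
        = ∑ i, #(Part i) * K i := by
      simp only [← sum_add_distrib, ← smul_eq_mul, ← sum_const]
      exact sum_congr rfl fun i _ => sum_congr rfl fun π hπ => Nat.sub_add_cancel (hs i π hπ).2
    have hIcard : #I ≤ ∑ i, ∑ π ∈ Part i, #(s i π) := card_searched_le s
    rw [card_sdiff_of_subset hI, card_image_of_injective _ hF'.1, card_univ, card_slot]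
    omega
  have hvalue : ∑ ω ∈ I, μ ω * vs ω + ∑ ω ∈ univ.image F' \ I, μ ω * vs ω
      ≤ ∑ l, μ (F l) * vs (F l) := by
    rw [add_comm, sum_sdiff hI, sum_image hF'.1.injOn]
    exact hmax F' hF'
  have hcostF : ∑ i, ∑ π ∈ Part i, (∑ x ∈ π, μ x) * c i #(profileOf Part K F i π)
      = ∑ i, ∑ π ∈ Part i, (∑ x ∈ π, μ x) * c i (K i) :=
    sum_congr rfl fun i _ => sum_congr rfl fun π hπ => by rw [card_profileOf hF hπ]
  rw [costInclusiveSocialPayoff_eq, costInclusiveSocialPayoff_eq, sum_searched_profileOf hF,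
    hcostF]
  linarith [fullCost_sub_cost_le_sum hμ hvs hc_convex hVC hs hD]

end Optimality

end SearchGame

theorem exists_cost_inclusive_socially_optimal_equilibrium_general
    {N Ω : Type} [Fintype N] [DecidableEq N] [Fintype Ω] [DecidableEq Ω]
    (Part : N → Finset (Finset Ω)) (K : N → ℕ) (μ : Ω → ℝ)
    (c : N → ℕ → ℝ) (v : N → ℕ → Ω → ℝ) (vs : Ω → ℝ)
    (hPart : ∀ i, IsPartition (Part i))
    (hμ_nonneg : ∀ ω, 0 ≤ μ ω)
    (hμ_cell : ∀ i, ∀ π ∈ Part i, 0 < ∑ ω ∈ π, μ ω)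
    (hc_convex : ∀ i k, c i (k + 1) - c i k ≤ c i (k + 2) - c i (k + 1))
    (hv_nonneg : ∀ i m ω, 0 ≤ v i m ω)
    (hv_dec : ∀ i m ω, v i (m + 1) ω ≤ v i m ω)
    (hvs_nonneg : ∀ ω, 0 ≤ vs ω)
    -- ordinal consistency
    (hOC : ∀ i, ∀ π ∈ Part i, ∀ ω ∈ π, ∀ ω' ∈ π,
      μ ω * v i 1 ω < μ ω' * v i 1 ω' → μ ω * vs ω ≤ μ ω' * vs ω')
    -- solitary-search dominance
    (hSSD1 : ∀ i, ∀ π ∈ Part i, ∀ ω ∈ π, ∀ ω' ∈ π,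
      (μ ω' / ∑ x ∈ π, μ x) * v i 2 ω' ≤ (μ ω / ∑ x ∈ π, μ x) * v i 1 ω)
    (hSSD2 : ∀ i, ∀ π ∈ Part i, ∀ ω ∈ π,
      c i (K i) - c i (K i - 1) ≤ (μ ω / ∑ x ∈ π, μ x) * v i 1 ω)
    -- social value outweighs cost
    (hVC : ∀ (ω : Ω) (i : N), ∀ π ∈ Part i,
      (∑ x ∈ π, μ x) * (c i (K i) - c i (K i - 1)) ≤ μ ω * vs ω)
    -- existence of a redundancy-free profile
    (hRF : ∃ s₀ : N → Finset Ω → Finset Ω, ValidStrat Part K s₀ ∧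
      (∀ i, ∀ π ∈ Part i, (s₀ i π).card = K i) ∧
      (∀ ω : Ω, mcount Part s₀ ω ≤ 1)) :
    ∃ s : N → Finset Ω → Finset Ω, IsNash Part K μ c v s ∧
      ∀ s' : N → Finset Ω → Finset Ω, ValidStrat Part K s' →
        costInclusiveSocialPayoff Part μ vs c s' ≤
        costInclusiveSocialPayoff Part μ vs c s := by
  open SearchGame in
  obtain ⟨s₀, hs₀, hfull₀, hm₀⟩ := hRF
  have hshared_le_solitary :
      ∀ i, ∀ π ∈ Part i, ∀ ω ∈ π, ∀ ω' ∈ π, μ ω * v i 2 ω ≤ μ ω' * v i 1 ω' := by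
    intro i π hπ ω hω ω' hω'
    have := hSSD1 i π hπ ω' hω' ω hω
    rwa [div_mul_eq_mul_div, div_mul_eq_mul_div,
      div_le_div_iff_of_pos_right (hμ_cell i π hπ)] at this
  have hmarginal_le_solitary : ∀ i, ∀ π ∈ Part i, ∀ ω ∈ π,
      (∑ x ∈ π, μ x) * (c i (K i) - c i (K i - 1)) ≤ μ ω * v i 1 ω := by
    intro i π hπ ω hω
    have := hSSD2 i π hπ ω hω
    rwa [div_mul_eq_mul_div, le_div_iff₀ (hμ_cell i π hπ), mul_comm] at this
  obtain ⟨F, hF, hmax, hexch⟩ := exists_greedy_optimal_placement vs hOC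
    (exists_placement_of_redundancyFree hPart hs₀ hfull₀ hm₀)
  exact ⟨profileOf Part K F,
    isNash_of_isGreedy hPart hμ_nonneg hc_convex hv_nonneg hv_dec hshared_le_solitary
      hmarginal_le_solitary (validStrat_profileOf hF) (fun i π hπ => card_profileOf hF hπ)
      (mcount_profileOf_le_one hF) (isGreedy_profileOf hF hexch),
    fun s' hs' =>
      costInclusiveSocialPayoff_le_profileOf hμ_nonneg hvs_nonneg hc_convex hVC hF hmax hs'⟩

/-- If payoffs are ordinally consistent and solitary-search dominant, social
value outweighs cost, and there exists a redundancy-free strategy profile, then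
the game admits a pure Nash equilibrium maximizing the cost-inclusive social
payoff over all valid pure profiles. -/
theorem exists_cost_inclusive_socially_optimal_equilibrium
    {N Ω : Type} [Fintype N] [DecidableEq N] [Fintype Ω] [DecidableEq Ω]
    (Part : N → Finset (Finset Ω)) (K : N → ℕ) (μ : Ω → ℝ)
    (c : N → ℕ → ℝ) (v : N → ℕ → Ω → ℝ) (vs : Ω → ℝ)
    (hPart : ∀ i, IsPartition (Part i))
    (hμ_nonneg : ∀ ω, 0 ≤ μ ω) (hμ_sum : ∑ ω, μ ω = 1)
    (hμ_cell : ∀ i, ∀ π ∈ Part i, 0 < ∑ ω ∈ π, μ ω)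
    (hc0 : ∀ i, c i 0 = 0)
    (hc_mono : ∀ i k, c i k ≤ c i (k + 1))
    (hc_convex : ∀ i k, c i (k + 1) - c i k ≤ c i (k + 2) - c i (k + 1))
    (hv_nonneg : ∀ i m ω, 0 ≤ v i m ω)
    (hv_dec : ∀ i m ω, v i (m + 1) ω ≤ v i m ω)
    (hvs_nonneg : ∀ ω, 0 ≤ vs ω)
    -- ordinal consistency
    (hOC : ∀ i, ∀ π ∈ Part i, ∀ ω ∈ π, ∀ ω' ∈ π,
      μ ω * v i 1 ω < μ ω' * v i 1 ω' → μ ω * vs ω ≤ μ ω' * vs ω')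
    -- solitary-search dominance
    (hSSD1 : ∀ i, ∀ π ∈ Part i, ∀ ω ∈ π, ∀ ω' ∈ π,
      (μ ω' / ∑ x ∈ π, μ x) * v i 2 ω' ≤ (μ ω / ∑ x ∈ π, μ x) * v i 1 ω)
    (hSSD2 : ∀ i, ∀ π ∈ Part i, ∀ ω ∈ π,
      c i (K i) - c i (K i - 1) ≤ (μ ω / ∑ x ∈ π, μ x) * v i 1 ω)
    -- social value outweighs cost
    (hVC : ∀ (ω : Ω) (i : N), ∀ π ∈ Part i,
      (∑ x ∈ π, μ x) * (c i (K i) - c i (K i - 1)) ≤ μ ω * vs ω)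
    -- existence of a redundancy-free profile
    (hRF : ∃ s₀ : N → Finset Ω → Finset Ω, ValidStrat Part K s₀ ∧
      (∀ i, ∀ π ∈ Part i, (s₀ i π).card = K i) ∧
      (∀ ω : Ω, mcount Part s₀ ω ≤ 1)) :
    ∃ s : N → Finset Ω → Finset Ω, IsNash Part K μ c v s ∧
      ∀ s' : N → Finset Ω → Finset Ω, ValidStrat Part K s' →
        costInclusiveSocialPayoff Part μ vs c s' ≤
        costInclusiveSocialPayoff Part μ vs c s :=
  exists_cost_inclusive_socially_optimal_equilibrium_general Part K μ c v vs hPart hμ_nonneg hμ_cell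
    hc_convex hv_nonneg hv_dec hvs_nonneg hOC hSSD1 hSSD2 hVC hRF
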